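/- Let Ω ⊊ ℝⁿ be an (ε,δ)-domain, let E be a Whitney decomposition of Ω and E′ a Whitney decomposition of Ω′ := (ℝⁿ \ Ω)° (E′ empty if Ω′ is empty). If Q ⊆ ℝⁿ is a dyadic cube with ℓ(Q) < δ, then there is a cube Q₀ ∈ E ∪ E′ with either Q₀ ⊇ Q or Q ⊇ Q₀, and ℓ(Q₀) ≥ (ε/(160√n))·ℓ(Q). -/

import Mathlib

open Set Metric MeasureTheory
open scoped ENNReal

noncomputable section

abbrev Eu (n : ℕ) := EuclideanSpace ℝ (Fin n)

variable {n : ℕ}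

/-- Distance to the boundary of `Ω`. -/
def dOm (Ω : Set (Eu n)) (x : Eu n) : ℝ := Metric.infDist x (frontier Ω)

/-- A (Lipschitz) curve in `Ω` from `x` to `y`, parametrized on `[0,1]`. -/
structure IsCurve (Ω : Set (Eu n)) (γ : ℝ → Eu n) (x y : Eu n) : Prop where
  lipschitz : ∃ K, LipschitzOnWith K γ (Set.Icc 0 1)
  source : γ 0 = x
  target : γ 1 = y
  mem : ∀ t ∈ Set.Icc (0:ℝ) 1, γ t ∈ Ω

/-- Arclength of the portion of the curve between parameters `t₁` and `t₂`. -/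
def arclengthOn (γ : ℝ → Eu n) (t₁ t₂ : ℝ) : ℝ := ∫ t in t₁..t₂, ‖deriv γ t‖

/-- Arclength of a curve parametrized on `[0,1]`. -/
def arclength (γ : ℝ → Eu n) : ℝ := arclengthOn γ 0 1

/-- Line integral `∫_γ g ds` of a function `g` along a curve `γ`. -/
def lineIntegral (g : Eu n → ℝ) (γ : ℝ → Eu n) : ℝ := ∫ t in (0:ℝ)..1, g (γ t) * ‖deriv γ t‖

/-- The quasi-hyperbolic distance `k_Ω`. -/
def kDist (Ω : Set (Eu n)) (x y : Eu n) : ℝ :=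
  sInf { r | ∃ γ : ℝ → Eu n, IsCurve Ω γ x y ∧ r = lineIntegral (fun z => (dOm Ω z)⁻¹) γ }

/-- Quasi-hyperbolic distance from a point to a set. -/
def kDistSet (Ω : Set (Eu n)) (x : Eu n) (S : Set (Eu n)) : ℝ := sInf (kDist Ω x '' S)

/-- The distance `j_Ω`. -/
def jDist (Ω : Set (Eu n)) (x y : Eu n) : ℝ :=
  (1/2) * Real.log ((1 + dist x y / dOm Ω x) * (1 + dist x y / dOm Ω y))

/-- A quasi-hyperbolic geodesic from `x` to `y` in `Ω`. -/
def IsQHGeodesic (Ω : Set (Eu n)) (γ : ℝ → Eu n) (x y : Eu n) : Prop :=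
  IsCurve Ω γ x y ∧ lineIntegral (fun z => (dOm Ω z)⁻¹) γ = kDist Ω x y

/-- `Ω` is a domain: a nonempty proper open connected subset of `ℝⁿ`. -/
def IsDom (Ω : Set (Eu n)) : Prop := IsOpen Ω ∧ IsConnected Ω ∧ Ω ≠ Set.univ

/-- `(ε,δ)`-domain in the sense of Jones. -/
def IsEpsDeltaDomain (Ω : Set (Eu n)) (ε δ : ℝ) : Prop :=
  ∀ x ∈ Ω, ∀ y ∈ Ω, dist x y < δ → ∃ γ : ℝ → Eu n, IsCurve Ω γ x y ∧
    arclength γ ≤ ε⁻¹ * dist x y ∧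
    ∀ t ∈ Set.Icc (0:ℝ) 1, dOm Ω (γ t) ≥ ε * (dist (γ t) x * dist (γ t) y) / dist x y

/-- Closed axis-parallel cube with lower corner `a` and sidelength `l`. -/
def cube (a : Eu n) (l : ℝ) : Set (Eu n) := {x : Eu n | ∀ i, x i ∈ Set.Icc (a i) (a i + l)}

/-- `cube a l` is a dyadic cube. -/
def IsDyadic (a : Eu n) (l : ℝ) : Prop :=
  ∃ (k : ℤ) (m : Fin n → ℤ), l = 2 ^ (-k) ∧ ∀ i, a i = (m i : ℝ) * 2 ^ (-k)

/-- The dyadic cube of generation `k` indexed by `m`. -/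
def dyCube (k : ℤ) (m : Fin n → ℤ) : Set (Eu n) :=
  {x : Eu n | ∀ i, x i ∈ Set.Icc ((m i : ℝ) * 2 ^ (-k)) ((m i : ℝ) * 2 ^ (-k) + 2 ^ (-k))}

/-- Average of `f` over `Q`. -/
def avg (f : Eu n → ℝ) (Q : Set (Eu n)) : ℝ := ⨍ x in Q, f x

/-- Mean oscillation of `f` over `Q`. -/
def mo (f : Eu n → ℝ) (Q : Set (Eu n)) : ℝ := ⨍ x in Q, |f x - avg f Q|

/-- The BMO seminorm of `f` over `U` (supremum over cubes contained in `U`). -/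
def bmoSup (U : Set (Eu n)) (f : Eu n → ℝ) : ℝ≥0∞ :=
  ⨆ (a : Eu n) (l : ℝ) (_ : 0 < l) (_ : cube a l ⊆ U), ENNReal.ofReal (mo f (cube a l))

/-- The nonhomogeneous `bmo_lam` norm of `f` over `U`. -/
def bmoNorm (U : Set (Eu n)) (lam : ℝ) (f : Eu n → ℝ) : ℝ≥0∞ :=
  (⨆ (a : Eu n) (l : ℝ) (_ : 0 < l) (_ : l < lam) (_ : cube a l ⊆ U),
      ENNReal.ofReal (mo f (cube a l))) +
  ⨆ (a : Eu n) (l : ℝ) (_ : lam ≤ l) (_ : cube a l ⊆ U),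
      ENNReal.ofReal |avg f (cube a l)|

/-- `f ∈ bmo_lam(U)`: integrable on every cube contained in `U`, with finite norm. -/
def MemBmo (U : Set (Eu n)) (lam : ℝ) (f : Eu n → ℝ) : Prop :=
  (∀ (a : Eu n) (l : ℝ), 0 < l → cube a l ⊆ U → IntegrableOn f (cube a l)) ∧
    bmoNorm U lam f < ⊤

/-- Distance between two sets. -/
def setDist (s t : Set (Eu n)) : ℝ := sInf (Set.image2 dist s t)

/-- A Whitney decomposition of an open set `O`, given as a set of
(lower corner, sidelength) pairs of closed dyadic cubes. -/
structure IsWhitney (O : Set (Eu n)) (W : Set (Eu n × ℝ)) : Prop where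
  countable : W.Countable
  dyadic : ∀ q ∈ W, IsDyadic q.1 q.2
  disjointInteriors : ∀ q ∈ W, ∀ q' ∈ W, q ≠ q' →
    interior (cube q.1 q.2) ∩ interior (cube q'.1 q'.2) = ∅
  cover : ⋃ q ∈ W, cube q.1 q.2 = O
  distLower : ∀ q ∈ W, q.2 ≤ setDist (cube q.1 q.2) (frontier O)
  distUpper : ∀ q ∈ W, setDist (cube q.1 q.2) (frontier O) ≤ 4 * Real.sqrt n * q.2
  sizes : ∀ q ∈ W, ∀ q' ∈ W, (cube q.1 q.2 ∩ cube q'.1 q'.2).Nonempty →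
    q.2 / q'.2 ∈ Set.Icc (1/4 : ℝ) 4

/-- Extension hypothesis for `(Ω, lam, C)`: every `f ∈ bmo_lam(Ω)` admits an
extension `F` to `ℝⁿ` with `‖F‖_{BMO(ℝⁿ)} ≤ C ‖f‖_{bmo_lam(Ω)}`. -/
def ExtHyp (Ω : Set (Eu n)) (lam C : ℝ) : Prop :=
  ∀ f : Eu n → ℝ, MemBmo Ω lam f → ∃ F : Eu n → ℝ,
    (∀ (a : Eu n) (l : ℝ), 0 < l → IntegrableOn F (cube a l)) ∧
    (∀ x ∈ Ω, F x = f x) ∧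
    bmoSup Set.univ F ≤ ENNReal.ofReal C * bmoNorm Ω lam f

/-- The set `S_lam = {x ∈ Ω : d_Ω(x) ≥ lam/4}`. -/
def Slam (Ω : Set (Eu n)) (lam : ℝ) : Set (Eu n) := {x ∈ Ω | lam / 4 ≤ dOm Ω x}

/-- `η_lam(x,y) = k_Ω(x, S_lam) + k_Ω(y, S_lam)`. -/
def etaLam (Ω : Set (Eu n)) (lam : ℝ) (x y : Eu n) : ℝ :=
  kDistSet Ω x (Slam Ω lam) + kDistSet Ω y (Slam Ω lam)

/-!
Let `c` be the centre of `Q`. Every `(ε,δ)`-domain has `ε ≤ 3`: the cigar curve from a point `x`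
very close to `∂Ω` to a point at distance `d` from `x` passes, at distance `d/2` from `x`, a point
whose distance to `∂Ω` is both `≥ εd/4` and `≤ 3d/4`. So if `d_Ω(c) ≥ ℓ/8` the point `c` is already at distance
`≥ εℓ/32` from `∂Ω`. Otherwise `c` is within `9ℓ/64` of some `x₀ ∈ Ω`. If `Ω` reaches distance
`ℓ/8` from `x₀`, the cigar curve from `x₀` to such a point, stopped at distance `ℓ/16` from `x₀`,
gives a point of `Q` with `d_Ω ≥ εℓ/32`; if not, `Ω ⊆ B(x₀, ℓ/8)` and the point `c + (7ℓ/16) e₁`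
of `Q` is far from `Ω`. This point `x` of the interior of `Q` lies in `Ω` or in `Ω'`, and the
Whitney cube through `x` meets the interior of `Q`, so the two dyadic cubes are nested; the
Whitney condition gives `εℓ/32 ≤ d_Ω(x) ≤ 5√n ℓ(Q₀)`.
-/

lemma dyadic_interval_subset {k k' m m' : ℤ} (hk : k ≤ k')
    (h₁ : (m : ℝ) * 2 ^ (-k) < m' * 2 ^ (-k') + 2 ^ (-k'))
    (h₂ : (m' : ℝ) * 2 ^ (-k') < m * 2 ^ (-k) + 2 ^ (-k)) :
    (m : ℝ) * 2 ^ (-k) ≤ m' * 2 ^ (-k') ∧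
      (m' : ℝ) * 2 ^ (-k') + 2 ^ (-k') ≤ m * 2 ^ (-k) + 2 ^ (-k) := by
  obtain ⟨M, hM⟩ : ∃ M : ℤ, (2 : ℝ) ^ (-k) = M * 2 ^ (-k') :=
    ⟨2 ^ (k' - k).toNat, by
      rw [Int.cast_pow, Int.cast_ofNat, ← zpow_natCast, ← zpow_add₀ two_ne_zero]
      congr 1
      omega⟩
  have hr : (0 : ℝ) < 2 ^ (-k') := by positivity
  rw [hM] at h₁ h₂ ⊢
  have h₁' : m * M < m' + 1 := by
    have : ((m * M : ℤ) : ℝ) * 2 ^ (-k') < ((m' + 1 : ℤ) : ℝ) * 2 ^ (-k') := by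
      push_cast
      linarith
    exact_mod_cast lt_of_mul_lt_mul_right this hr.le
  have h₂' : m' < m * M + M := by
    have : ((m' : ℤ) : ℝ) * 2 ^ (-k') < ((m * M + M : ℤ) : ℝ) * 2 ^ (-k') := by
      push_cast
      linarith
    exact_mod_cast lt_of_mul_lt_mul_right this hr.le
  have e₁ : ((m * M : ℤ) : ℝ) ≤ m' := by exact_mod_cast (by omega : m * M ≤ m')
  have e₂ : ((m' + 1 : ℤ) : ℝ) ≤ ((m * M + M : ℤ) : ℝ) := by
    exact_mod_cast (by omega : m' + 1 ≤ m * M + M)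
  push_cast at e₁ e₂
  constructor <;> nlinarith

lemma IsDyadic.pos {a : Eu n} {l : ℝ} (h : IsDyadic a l) : 0 < l := by
  obtain ⟨k, m, rfl, -⟩ := h
  positivity

lemma IsDyadic.cube_subset_or_subset {a b : Eu n} {l l' : ℝ} (ha : IsDyadic a l)
    (hb : IsDyadic b l') (h : ∀ i, a i < b i + l' ∧ b i < a i + l) :
    cube a l ⊆ cube b l' ∨ cube b l' ⊆ cube a l := by
  wlog hll : l' ≤ l generalizing a b l l'
  · exact (this hb ha (fun i => (h i).symm) (le_of_not_ge hll)).symm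
  obtain ⟨k, m, rfl, ha⟩ := ha
  obtain ⟨k', m', rfl, hb⟩ := hb
  have hk : k ≤ k' := by
    have := (zpow_le_zpow_iff_right₀ one_lt_two).mp hll
    omega
  right
  intro x hx i
  obtain ⟨h₁, h₂⟩ := h i
  obtain ⟨hx₁, hx₂⟩ := hx i
  rw [ha i, hb i] at h₁ h₂
  rw [hb i] at hx₁ hx₂
  obtain ⟨e₁, e₂⟩ := dyadic_interval_subset hk h₁ h₂
  rw [ha i]
  constructor <;> linarith

lemma dist_le_of_mem_cube {a u v : Eu n} {l : ℝ} (hl : 0 ≤ l) (hu : u ∈ cube a l)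
    (hv : v ∈ cube a l) : dist u v ≤ √n * l := by
  have hcoord : ∀ i ∈ Finset.univ, dist (u i) (v i) ^ 2 ≤ l ^ 2 := by
    intro i _
    obtain ⟨hu₁, hu₂⟩ := hu i
    obtain ⟨hv₁, hv₂⟩ := hv i
    rw [Real.dist_eq, sq_abs]
    nlinarith
  calc dist u v = √(∑ i, dist (u i) (v i) ^ 2) := EuclideanSpace.dist_eq u v
    _ ≤ √(∑ _i : Fin n, l ^ 2) := Real.sqrt_le_sqrt (Finset.sum_le_sum hcoord)
    _ = √n * l := by
      rw [Finset.sum_const, Finset.card_univ, Fintype.card_fin, nsmul_eq_mul,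
        Real.sqrt_mul (Nat.cast_nonneg n), Real.sqrt_sq hl]

def cubeCenter (a : Eu n) (l : ℝ) : Eu n := WithLp.toLp 2 fun i => a i + l / 2

lemma mem_Ioo_of_dist_cubeCenter_lt {a x : Eu n} {l : ℝ} (hx : dist x (cubeCenter a l) < l / 2)
    (i : Fin n) : x i ∈ Ioo (a i) (a i + l) := by
  have h := (PiLp.dist_apply_le x (cubeCenter a l) i).trans_lt hx
  rw [Real.dist_eq, abs_sub_lt_iff] at h
  change x i - (a i + l / 2) < l / 2 ∧ a i + l / 2 - x i < l / 2 at h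
  constructor <;> linarith

namespace IsWhitney

variable {O : Set (Eu n)} {W : Set (Eu n × ℝ)}

lemma infDist_le (hW : IsWhitney O W) {q : Eu n × ℝ} (hq : q ∈ W) {x : Eu n}
    (hx : x ∈ cube q.1 q.2) {F : Set (Eu n)} (hF : frontier O ⊆ F) :
    infDist x F ≤ 5 * √n * q.2 := by
  have hq₀ : 0 < q.2 := (hW.dyadic q hq).pos
  -- `setDist` of an empty configuration would be `sInf ∅ = 0 < ℓ(q)`
  have hne : (image2 dist (cube q.1 q.2) (frontier O)).Nonempty := by
    by_contra h
    have := hW.distLower q hq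
    rw [setDist, not_nonempty_iff_eq_empty.mp h, Real.sInf_empty] at this
    linarith
  have hlow : infDist x F - √n * q.2 ≤ setDist (cube q.1 q.2) (frontier O) := by
    refine le_csInf hne ?_
    rintro _ ⟨u, hu, w, hw, rfl⟩
    linarith [infDist_le_dist_of_mem (x := x) (hF hw), dist_le_of_mem_cube hq₀.le hx hu,
      dist_triangle x u w]
  linarith [hW.distUpper q hq]

lemma exists_subset_or_subset (hW : IsWhitney O W) {a : Eu n} {l : ℝ} (ha : IsDyadic a l)
    {x : Eu n} (hxa : ∀ i, x i ∈ Ioo (a i) (a i + l)) (hxO : x ∈ O) {F : Set (Eu n)}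
    (hF : frontier O ⊆ F) :
    ∃ q ∈ W, (cube a l ⊆ cube q.1 q.2 ∨ cube q.1 q.2 ⊆ cube a l) ∧
      infDist x F ≤ 5 * √n * q.2 := by
  rw [← hW.cover, mem_iUnion₂] at hxO
  obtain ⟨q, hq, hxq⟩ := hxO
  refine ⟨q, hq, ha.cube_subset_or_subset (hW.dyadic q hq) fun i => ⟨?_, ?_⟩,
    hW.infDist_le hq hxq hF⟩
  · linarith [(hxa i).1, (hxq i).2]
  · linarith [(hxa i).2, (hxq i).1]

end IsWhitney

lemma IsCurve.continuousOn {Ω : Set (Eu n)} {γ : ℝ → Eu n} {x y : Eu n}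
    (hγ : IsCurve Ω γ x y) : ContinuousOn γ (Icc 0 1) := by
  obtain ⟨K, hK⟩ := hγ.lipschitz
  exact hK.continuousOn

lemma IsPreconnected.exists_dist_eq {α : Type*} [PseudoMetricSpace α] {s : Set α}
    (hs : IsPreconnected s) {x w : α} (hx : x ∈ s) (hw : w ∈ s) {d : ℝ} (hd₀ : 0 ≤ d)
    (hd : d ≤ dist x w) : ∃ y ∈ s, dist x y = d :=
  hs.intermediate_value hx hw (continuous_const.dist continuous_id).continuousOn
    ⟨by simpa using hd₀, hd⟩

namespace IsEpsDeltaDomain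

variable {Ω : Set (Eu n)} {ε δ : ℝ}

lemma exists_dist_eq_half_le_dOm (hED : IsEpsDeltaDomain Ω ε δ) (hε : 0 ≤ ε) {x y : Eu n}
    (hx : x ∈ Ω) (hy : y ∈ Ω) (hxy : dist x y < δ) (hxy₀ : 0 < dist x y) :
    ∃ z ∈ Ω, dist z x = dist x y / 2 ∧ ε * dist x y / 4 ≤ dOm Ω z := by
  obtain ⟨γ, hγ, -, hcigar⟩ := hED x hx y hy hxy
  set d := dist x y
  have hcont : ContinuousOn (fun t => dist (γ t) x) (Icc 0 1) :=
    (continuous_id.dist continuous_const).comp_continuousOn hγ.continuousOn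
  have hd : d / 2 ∈ Icc (dist (γ 0) x) (dist (γ 1) x) := by
    rw [hγ.source, hγ.target, dist_self, dist_comm]
    constructor <;> linarith
  obtain ⟨t, ht, hzx⟩ := intermediate_value_Icc zero_le_one hcont hd
  have hzx : dist (γ t) x = d / 2 := hzx
  have hzy : d / 2 ≤ dist (γ t) y := by linarith [dist_triangle x (γ t) y, dist_comm x (γ t)]
  refine ⟨γ t, hγ.mem t ht, hzx, ?_⟩
  calc ε * d / 4 = ε * (d / 2 * (d / 2)) / d := by field_simp; ring
    _ ≤ ε * (dist (γ t) x * dist (γ t) y) / d := by rw [hzx]; gcongr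
    _ ≤ dOm Ω (γ t) := hcigar t ht

lemma le_three (hΩ : IsDom Ω) (hδ : 0 < δ) (hED : IsEpsDeltaDomain Ω ε δ) : ε ≤ 3 := by
  by_contra! h3
  obtain ⟨hΩo, hΩc, hΩne⟩ := hΩ
  obtain ⟨y₀, hy₀⟩ := hΩc.nonempty
  obtain ⟨ρ, hρ, hball⟩ := Metric.isOpen_iff.mp hΩo y₀ hy₀
  obtain ⟨p, hp⟩ := nonempty_frontier_iff.mpr ⟨⟨y₀, hy₀⟩, hΩne⟩
  obtain ⟨d, hd, hdρ, hdδ⟩ : ∃ d : ℝ, 0 < d ∧ d ≤ ρ / 2 ∧ d < δ :=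
    ⟨min ρ δ / 2, by positivity, by linarith [min_le_left ρ δ], by linarith [min_le_right ρ δ]⟩
  obtain ⟨x, hx, hpx⟩ := mem_closure_iff.mp (frontier_subset_closure hp) (d / 4) (by positivity)
  -- `y₀` is far from `x`, otherwise `p` would lie in `B(y₀, ρ) ⊆ Ω`
  have hfar : d ≤ dist x y₀ := by
    by_contra! h
    refine (hΩo.frontier_eq ▸ hp).2 (hball ?_)
    rw [mem_ball]
    linarith [dist_triangle p x y₀]
  obtain ⟨y, hy, hxy⟩ := hΩc.isPreconnected.exists_dist_eq hx hy₀ hd.le hfar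
  obtain ⟨z, -, hzx, hz⟩ := hED.exists_dist_eq_half_le_dOm (by linarith) hx hy
    (by linarith) (by linarith)
  have hzp : dOm Ω z ≤ dist z p := infDist_le_dist_of_mem hp
  rw [hxy] at hzx hz
  have : ε * d < 3 * d := by linarith [dist_triangle z x p, dist_comm x p]
  exact absurd (lt_of_mul_lt_mul_right this hd.le) (by linarith)

lemma exists_dist_lt_le_dOm (hn : 1 ≤ n) (hΩ : IsDom Ω) (hε : 0 < ε)
    (hED : IsEpsDeltaDomain Ω ε δ) (c : Eu n) {l : ℝ} (hl₀ : 0 < l) (hl : l < δ) :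
    ∃ x, dist x c < l / 2 ∧ ε * l / 32 ≤ dOm Ω x := by
  have hε₃ := hED.le_three hΩ (hl₀.trans hl)
  obtain ⟨-, hΩc, hΩne⟩ := hΩ
  have hfr : (frontier Ω).Nonempty := nonempty_frontier_iff.mpr ⟨hΩc.nonempty, hΩne⟩
  rcases le_or_gt (l / 8) (dOm Ω c) with hc | hc
  · exact ⟨c, by rw [dist_self]; positivity, by nlinarith⟩
  obtain ⟨p, hp, hcp⟩ := (infDist_lt_iff hfr).mp hc
  obtain ⟨x₀, hx₀, hpx₀⟩ := mem_closure_iff.mp (frontier_subset_closure hp) (l / 64) (by positivity)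
  have hcx₀ : dist c x₀ < 9 * l / 64 := by linarith [dist_triangle c p x₀]
  by_cases hfar : ∃ w ∈ Ω, l / 8 ≤ dist x₀ w
  · obtain ⟨w, hw, hx₀w⟩ := hfar
    obtain ⟨y, hy, hx₀y⟩ := hΩc.isPreconnected.exists_dist_eq hx₀ hw (by positivity) hx₀w
    obtain ⟨z, -, hzx₀, hz⟩ :=
      hED.exists_dist_eq_half_le_dOm hε.le hx₀ hy (by linarith) (by linarith)
    rw [hx₀y] at hzx₀ hz
    exact ⟨z, by linarith [dist_triangle z x₀ c, dist_comm c x₀], by linarith⟩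
  push Not at hfar
  set v : Eu n := EuclideanSpace.single (⟨0, hn⟩ : Fin n) (7 * l / 16)
  have hv : ‖v‖ = 7 * l / 16 := by
    rw [PiLp.norm_single, Real.norm_of_nonneg (by positivity)]
  have hvc : dist (c + v) c = 7 * l / 16 := by rw [dist_eq_norm, add_sub_cancel_left, hv]
  have hΩball : Ω ⊆ ball x₀ (l / 8) := fun w hw => mem_ball'.mpr (hfar w hw)
  have hfar' : dist (c + v) x₀ - l / 8 ≤ dOm Ω (c + v) := by
    rw [dOm, le_infDist hfr]
    intro w hw
    have : dist w x₀ ≤ l / 8 :=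
      closure_ball_subset_closedBall (closure_mono hΩball (frontier_subset_closure hw))
    linarith [dist_triangle (c + v) w x₀]
  refine ⟨c + v, by linarith, ?_⟩
  nlinarith [dist_triangle (c + v) x₀ c, dist_comm c x₀]

end IsEpsDeltaDomain

theorem stmt_6_general (n : ℕ) (hn : 1 ≤ n) (Ω : Set (Eu n)) (hΩ : IsDom Ω)
    (ε δ : ℝ) (hε : 0 < ε) (hED : IsEpsDeltaDomain Ω ε δ)
    (E E' : Set (Eu n × ℝ)) (hE : IsWhitney Ω E) (hE' : IsWhitney (interior Ωᶜ) E')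
    (a : Eu n) (l : ℝ) (hdy : IsDyadic a l) (hl : l < δ) :
    ∃ q ∈ E ∪ E', (cube a l ⊆ cube q.1 q.2 ∨ cube q.1 q.2 ⊆ cube a l) ∧
      ε / (160 * Real.sqrt n) * l ≤ q.2 := by
  have hl₀ := hdy.pos
  obtain ⟨x, hxc, hx⟩ := hED.exists_dist_lt_le_dOm hn hΩ hε (cubeCenter a l) hl₀ hl
  have hxQ := mem_Ioo_of_dist_cubeCenter_lt hxc
  have hxΩ : x ∈ Ω ∨ x ∈ interior Ωᶜ := by
    have hxfr : x ∉ frontier Ω := fun h => by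
      rw [dOm, infDist_zero_of_mem h] at hx
      linarith [mul_pos hε hl₀]
    rw [interior_compl]
    rw [hΩ.1.frontier_eq] at hxfr
    tauto
  obtain ⟨q, hq, hnest, hxq⟩ : ∃ q ∈ E ∪ E',
      (cube a l ⊆ cube q.1 q.2 ∨ cube q.1 q.2 ⊆ cube a l) ∧ dOm Ω x ≤ 5 * √n * q.2 := by
    rcases hxΩ with hxΩ | hxΩ'
    · obtain ⟨q, hq, h⟩ := hE.exists_subset_or_subset hdy hxQ hxΩ subset_rfl
      exact ⟨q, Or.inl hq, h⟩
    · obtain ⟨q, hq, h⟩ := hE'.exists_subset_or_subset hdy hxQ hxΩ'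
        (frontier_interior_subset.trans (frontier_compl Ω).subset)
      exact ⟨q, Or.inr hq, h⟩
  refine ⟨q, hq, hnest, ?_⟩
  have hsn : 0 < √(n : ℝ) := Real.sqrt_pos.mpr (by exact_mod_cast hn)
  rw [div_mul_eq_mul_div, div_le_iff₀ (by positivity)]
  linarith

/-- every dyadic cube of sidelength `< δ` is comparable to a
Whitney cube of `Ω` or of `Ω' = (ℝⁿ \ Ω)°`. -/
theorem stmt_6 (n : ℕ) (hn : 1 ≤ n) (Ω : Set (Eu n)) (hΩ : IsDom Ω)
    (ε δ : ℝ) (hε : 0 < ε) (hδ : 0 < δ) (hED : IsEpsDeltaDomain Ω ε δ)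
    (E E' : Set (Eu n × ℝ)) (hE : IsWhitney Ω E) (hE' : IsWhitney (interior Ωᶜ) E')
    (a : Eu n) (l : ℝ) (hdy : IsDyadic a l) (hl : l < δ) :
    ∃ q ∈ E ∪ E', (cube a l ⊆ cube q.1 q.2 ∨ cube q.1 q.2 ⊆ cube a l) ∧
      ε / (160 * Real.sqrt n) * l ≤ q.2 :=
  stmt_6_general n hn Ω hΩ ε δ hε hED E E' hE hE' a l hdy hl
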